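/- arXiv:1008.3117 — 6 statements merged into one kernel-verified Lean document; each statement's English description precedes it below -/
import Mathlib

section
/- Let Q be a binary quadratic form and let ℓ be a nonzero linear form in x₁, x₂ over ℂ. Then the three binary quadratic forms Q, ℓ², and ((Q,ℓ)₁)² are linearly dependent over ℂ. -/
/-!
Write `Q = a x² + b xy + c y²` and `ℓ = p x + q y`. Then `2 (Q,ℓ)₁ = (2aq − bp) x + (bq − 2cp) y`,
and the classical syzygy `4 (Q,ℓ)₁² = 4 Q(q,−p) · Q + (b² − 4ac) · ℓ²` holds identically in the
coefficients. The coefficient of `(Q,ℓ)₁²` in it is `−4 ≠ 0`, so the dependence is nontrivial.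
-/

open MvPolynomial Finset

/-- `k`-fold partial derivative with respect to variable `i`. -/
noncomputable def pd (i : Fin 2) (k : ℕ) (p : MvPolynomial (Fin 2) ℂ) :
    MvPolynomial (Fin 2) ℂ :=
  (fun q => pderiv i q)^[k] p

/-- The `r`-th transvectant of binary forms `A`, `B` of orders `m`, `n`:
`(A,B)_r = ((m−r)!(n−r)!/(m!·n!)) · Σ_{i=0}^{r} (−1)^i C(r,i)
  (∂^r A/∂x₁^{r−i}∂x₂^i)(∂^r B/∂x₂^{r−i}∂x₁^i)`. -/
noncomputable def transv (m n r : ℕ) (A B : MvPolynomial (Fin 2) ℂ) :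
    MvPolynomial (Fin 2) ℂ :=
  ((((m - r).factorial * (n - r).factorial : ℕ) : ℂ) / ((m.factorial * n.factorial : ℕ) : ℂ)) •
    ∑ i ∈ range (r + 1),
      ((-1 : ℂ) ^ i * (r.choose i : ℂ)) •
        (pd 0 (r - i) (pd 1 i A) * pd 1 (r - i) (pd 0 i B))

lemma Finsupp.eq_single_add_single_of_fin_two {M : Type*} [AddZeroClass M] (d : Fin 2 →₀ M) :
    d = Finsupp.single 0 (d 0) + Finsupp.single 1 (d 1) := by
  ext i; fin_cases i <;> simp

theorem MvPolynomial.IsHomogeneous.eq_sum_binary {R : Type*} [CommSemiring R] {n : ℕ}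
    {P : MvPolynomial (Fin 2) R} (hP : P.IsHomogeneous n) :
    P = ∑ k ∈ range (n + 1),
      C (coeff (Finsupp.single 0 k + Finsupp.single 1 (n - k)) P) * (X 0 ^ k * X 1 ^ (n - k)) := by
  ext d
  simp only [coeff_sum, X_pow_eq_monomial, monomial_mul, coeff_C_mul, coeff_monomial,
    mul_ite, mul_one, mul_zero]
  by_cases hd : d 0 + d 1 = n
  · have hd' : Finsupp.single 0 (d 0) + Finsupp.single 1 (n - d 0) = d := by
      rw [Finsupp.eq_single_add_single_of_fin_two d, ← hd]; simp
    rw [Finset.sum_eq_single (d 0), if_pos hd', hd']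
    · rintro k - hk
      rw [if_neg]
      rintro rfl; simp at hk
    · intro h; simp at h; omega
  · rw [hP.coeff_eq_zero, Finset.sum_eq_zero]
    · intro k hk
      rw [if_neg]
      rintro rfl; simp at hk; simp at hd; omega
    · rw [Finsupp.degree_eq_sum, Fin.sum_univ_two]; exact hd

theorem MvPolynomial.IsHomogeneous.exists_eq_binary_quadratic {R : Type*} [CommSemiring R]
    {P : MvPolynomial (Fin 2) R} (hP : P.IsHomogeneous 2) :
    ∃ a b c : R, P = C a * X 0 ^ 2 + C b * (X 0 * X 1) + C c * X 1 ^ 2 := by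
  refine ⟨coeff (Finsupp.single 0 2) P, coeff (Finsupp.single 0 1 + Finsupp.single 1 1) P,
    coeff (Finsupp.single 1 2) P, ?_⟩
  conv_lhs => rw [hP.eq_sum_binary]
  simp only [sum_range_succ, sum_range_zero, Nat.reduceSub, Finsupp.single_zero, zero_add,
    add_zero]
  ring

theorem MvPolynomial.IsHomogeneous.exists_eq_binary_linear {R : Type*} [CommSemiring R]
    {P : MvPolynomial (Fin 2) R} (hP : P.IsHomogeneous 1) :
    ∃ p q : R, P = C p * X 0 + C q * X 1 := by
  refine ⟨coeff (Finsupp.single 0 1) P, coeff (Finsupp.single 1 1) P, ?_⟩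
  conv_lhs => rw [hP.eq_sum_binary]
  simp only [sum_range_succ, sum_range_zero, Nat.reduceSub, Finsupp.single_zero, zero_add,
    add_zero]
  ring

theorem two_smul_transv_quadratic_linear (a b c p q : ℂ) :
    (2 : ℂ) • transv 2 1 1 (C a * X 0 ^ 2 + C b * (X 0 * X 1) + C c * X 1 ^ 2)
        (C p * X 0 + C q * X 1) =
      C (2 * a * q - b * p) * X 0 + C (b * q - 2 * c * p) * X 1 := by
  rw [transv, smul_smul, sum_range_succ, sum_range_one]
  norm_num [Nat.factorial]
  simp [pd, map_ofNat]
  ring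

theorem transv_quadratic_linear_syzygy (a b c p q : ℂ) :
    let Q : MvPolynomial (Fin 2) ℂ := C a * X 0 ^ 2 + C b * (X 0 * X 1) + C c * X 1 ^ 2
    let L : MvPolynomial (Fin 2) ℂ := C p * X 0 + C q * X 1
    (4 * (a * q ^ 2 - b * p * q + c * p ^ 2)) • Q + (b ^ 2 - 4 * a * c) • L ^ 2
      + (-4 : ℂ) • transv 2 1 1 Q L ^ 2 = 0 := by
  intro Q L
  have h4 : (-4 : ℂ) • transv 2 1 1 Q L ^ 2 = (-1 : ℂ) • ((2 : ℂ) • transv 2 1 1 Q L) ^ 2 := by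
    rw [smul_pow, smul_smul]
    norm_num
  rw [h4, two_smul_transv_quadratic_linear]
  simp only [Q, L, smul_eq_C_mul, map_mul, map_add, map_sub, map_pow, map_neg, map_one, map_ofNat]
  ring

theorem stmt0_general (Q L : MvPolynomial (Fin 2) ℂ) (hQ : Q.IsHomogeneous 2)
    (hL : L.IsHomogeneous 1) :
    ∃ a b c : ℂ, ¬(a = 0 ∧ b = 0 ∧ c = 0) ∧
      a • Q + b • L ^ 2 + c • (transv 2 1 1 Q L) ^ 2 = 0 := by
  obtain ⟨a, b, c, rfl⟩ := hQ.exists_eq_binary_quadratic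
  obtain ⟨p, q, rfl⟩ := hL.exists_eq_binary_linear
  exact ⟨_, _, -4, by norm_num, transv_quadratic_linear_syzygy a b c p q⟩

/-- if `Q` is a binary quadratic form and `ℓ` a nonzero linear form,
then `Q`, `ℓ²` and `((Q,ℓ)₁)²` are linearly dependent over `ℂ`. -/
theorem stmt0 (Q L : MvPolynomial (Fin 2) ℂ) (hQ : Q.IsHomogeneous 2)
    (hL : L.IsHomogeneous 1) (hL0 : L ≠ 0) :
    ∃ a b c : ℂ, ¬(a = 0 ∧ b = 0 ∧ c = 0) ∧
      a • Q + b • L ^ 2 + c • (transv 2 1 1 Q L) ^ 2 = 0 :=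
  stmt0_general Q L hQ hL
end

section
/- Let Q be a binary quadratic form. For every linear form ℓ in x₁, x₂ one has (Q,(Q,ℓ)₁)₁ = (1/4)·Δ_Q·ℓ. Consequently, if F = ∏_{i=1}^{d} ℓ_i is a product of d linear forms, then 4^d · ∏_{i=1}^{d} (Q,(Q,ℓ_i)₁)₁ = Δ_Q^d · F; that is, the map σ_Q defined on products of linear forms by σ_Q(∏ ℓ_i) = 2^d ∏ (Q,ℓ_i)₁ satisfies σ_Q(σ_Q(F)) = Δ_Q^d · F. -/
open MvPolynomial Finset

/-- The binary quadratic form `Q = q₀x₁² + 2q₁x₁x₂ + q₂x₂²`. -/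
noncomputable def quadF (q0 q1 q2 : ℂ) : MvPolynomial (Fin 2) ℂ :=
  C q0 * X 0 ^ 2 + C (2 * q1) * (X 0 * X 1) + C q2 * X 1 ^ 2

/-!
Every linear form is `ℓ = a x₁ + b x₂` (Euler's identity), and the first transvectant with `Q`
is half the Jacobian, so `(Q, ℓ)₁` is again linear with coefficient vector `M (a, b)`, where
`M = [[-q₁, q₀], [-q₂, q₁]]`. Since `tr M = 0`, Cayley–Hamilton gives
`M² = -(det M) I = (q₁² - q₀q₂) I`, i.e. `(Q, (Q, ℓ)₁)₁ = Δ_Q/4 · ℓ`; the product formula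
follows factor by factor.
-/

theorem MvPolynomial.IsHomogeneous.exists_eq_sum_smul_X {σ R : Type*} [Fintype σ]
    [CommSemiring R] {φ : MvPolynomial σ R} (h : φ.IsHomogeneous 1) :
    ∃ a : σ → R, φ = ∑ i, a i • X i := by
  have hconst : ∀ i, pderiv i φ = C (coeff 0 (pderiv i φ)) := fun i =>
    totalDegree_eq_zero_iff_eq_C.mp <| (totalDegree_zero_iff_isHomogeneous σ).mpr h.pderiv
  refine ⟨fun i => coeff 0 (pderiv i φ), ?_⟩
  simpa [← hconst, smul_eq_C_mul, mul_comm] using h.sum_X_mul_pderiv.symm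

theorem transv_one (m n : ℕ) (A B : MvPolynomial (Fin 2) ℂ) :
    transv m n 1 A B =
      ((((m - 1).factorial * (n - 1).factorial : ℕ) : ℂ) / ((m.factorial * n.factorial : ℕ) : ℂ)) •
        (pderiv 0 A * pderiv 1 B - pderiv 1 A * pderiv 0 B) := by
  simp [transv, pd, sum_range_succ, sub_eq_add_neg]

theorem pderiv_zero_quadF (q0 q1 q2 : ℂ) :
    pderiv 0 (quadF q0 q1 q2) = (2 : ℂ) • (q0 • X 0 + q1 • X 1) := by
  rw [quadF, C_mul', C_mul', C_mul']
  simp only [map_add, Derivation.map_smul, Derivation.leibniz_pow, Derivation.leibniz,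
    pderiv_X_self, pderiv_X_of_ne one_ne_zero, smul_eq_mul,
    Nat.add_one_sub_one, pow_one, mul_one, mul_zero]
  module

theorem pderiv_one_quadF (q0 q1 q2 : ℂ) :
    pderiv 1 (quadF q0 q1 q2) = (2 : ℂ) • (q1 • X 0 + q2 • X 1) := by
  rw [quadF, C_mul', C_mul', C_mul']
  simp only [map_add, Derivation.map_smul, Derivation.leibniz_pow, Derivation.leibniz,
    pderiv_X_self, pderiv_X_of_ne zero_ne_one, smul_eq_mul,
    Nat.add_one_sub_one, pow_one, mul_one, mul_zero]
  module

theorem transv_quadF_linear (q0 q1 q2 a b : ℂ) :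
    transv 2 1 1 (quadF q0 q1 q2) (a • X 0 + b • X 1) =
      (q0 * b - q1 * a) • X 0 + (q1 * b - q2 * a) • X 1 := by
  rw [transv_one, pderiv_zero_quadF, pderiv_one_quadF]
  simp only [map_add, Derivation.map_smul, pderiv_X_self, pderiv_X_of_ne one_ne_zero,
    pderiv_X_of_ne zero_ne_one, smul_zero, add_zero, zero_add, mul_smul_comm, mul_one]
  norm_num only [Nat.factorial]
  module

theorem transv_quadF_transv_quadF_of_isHomogeneous_one (q0 q1 q2 : ℂ)
    {L : MvPolynomial (Fin 2) ℂ} (hL : L.IsHomogeneous 1) :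
    transv 2 1 1 (quadF q0 q1 q2) (transv 2 1 1 (quadF q0 q1 q2) L) =
      (q1 ^ 2 - q0 * q2) • L := by
  obtain ⟨a, rfl⟩ := hL.exists_eq_sum_smul_X
  rw [Fin.sum_univ_two, transv_quadF_linear, transv_quadF_linear]
  module

/-- `(Q,(Q,ℓ)₁)₁ = (1/4)Δ_Q ℓ` for every linear form `ℓ`, and consequently
for `F = ∏ ℓᵢ` one has `4^d ∏ (Q,(Q,ℓᵢ)₁)₁ = Δ_Q^d F`. -/
theorem stmt1 (q0 q1 q2 : ℂ) :
    (∀ L : MvPolynomial (Fin 2) ℂ, L.IsHomogeneous 1 →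
      transv 2 1 1 (quadF q0 q1 q2) (transv 2 1 1 (quadF q0 q1 q2) L) =
        ((4 * (q1 ^ 2 - q0 * q2)) / 4) • L) ∧
    (∀ d : ℕ, ∀ L : Fin d → MvPolynomial (Fin 2) ℂ, (∀ i, (L i).IsHomogeneous 1) →
      (4 : ℂ) ^ d •
          ∏ i, transv 2 1 1 (quadF q0 q1 q2) (transv 2 1 1 (quadF q0 q1 q2) (L i)) =
        (4 * (q1 ^ 2 - q0 * q2)) ^ d • ∏ i, L i) := by
  constructor
  · intro L hL
    rw [show (4 * (q1 ^ 2 - q0 * q2)) / 4 = q1 ^ 2 - q0 * q2 by ring]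
    exact transv_quadF_transv_quadF_of_isHomogeneous_one q0 q1 q2 hL
  · intro d L hL
    simp_rw [transv_quadF_transv_quadF_of_isHomogeneous_one q0 q1 q2 (hL _)]
    rw [← Finset.smul_prod, smul_smul, card_univ, Fintype.card_fin, ← mul_pow]
end

section
/- Fix d ≥ 1 and set n = ⌊d/2⌋. For every integer 0 ≤ i ≤ n, the coefficient α_{i,i}^{(0)} = ω(d−2i, d−2i; d−2i, d−2i; 0) is a strictly positive rational number. -/
open MvPolynomial Finset

/-- `rfac k` is `1/k!` for `k ≥ 0` and `0` for `k < 0` (indicator of nonnegativity of a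
factorial argument appearing in a denominator). -/
noncomputable def rfac (k : ℤ) : ℂ := if 0 ≤ k then (1 : ℂ) / (k.toNat.factorial : ℂ) else 0

noncomputable def P1 (d a b r s : ℕ) : ℂ :=
  ((a.factorial : ℂ) * (b.factorial : ℂ) * (r.factorial : ℂ) * (s.factorial : ℂ) *
      ((d - r).factorial : ℂ) * ((2 * b - r).factorial : ℂ) * ((2 * a - s).factorial : ℂ) *
      ((2 * b + d - 2 * r - s).factorial : ℂ)) /
    (((2 * a).factorial : ℂ) * ((2 * b).factorial : ℂ) * ((2 * b + d - 2 * r).factorial : ℂ))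

noncomputable def P2 (d a b r s t : ℕ) : ℂ :=
  (((2 * t + 1).factorial : ℂ) * (((a + b + t) / 2).factorial : ℂ) *
      ((a + b - t).factorial : ℂ) * ((a + t - b).factorial : ℂ) * ((b + t - a).factorial : ℂ)) /
    ((t.factorial : ℂ) * ((a + b + t + 1).factorial : ℂ) *
      ((a + b + d - r - s + t + 1).factorial : ℂ) * (((a + b - t) / 2).factorial : ℂ) *
      (((a + t - b) / 2).factorial : ℂ) * (((b + t - a) / 2).factorial : ℂ))

noncomputable def P3 (d a b r s t : ℕ) : ℂ :=
  ∑ z ∈ range (a + b + d + t + 2),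
    (-1 : ℂ) ^ z * ((z + 1).factorial : ℂ) *
      rfac ((z : ℤ) - a - b - t) * rfac ((z : ℤ) - 2 * b - d + r) *
      rfac ((z : ℤ) - 2 * a - 2 * b - d + 2 * r + s) *
      rfac ((z : ℤ) - a - b - d + r + s - t) * rfac ((a : ℤ) + b + d - r + t - z) *
      rfac (2 * (a : ℤ) + 2 * b + d - r - s - z) *
      rfac ((a : ℤ) + 3 * b + d - 2 * r - s + t - z)

/-- The coefficient `ω(a,b;r,s;t)` (for binary `d`-ics). -/
noncomputable def omegaC (d a b r s t : ℕ) : ℂ :=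
  (-1 : ℂ) ^ (d + r + s + (a + b - t) / 2) * P1 d a b r s * P2 d a b r s t * P3 d a b r s t

/-! On the diagonal `a = b = r = s = m`, `t = 0` the constraints `z ≥ 2b + d − r = m + d` and
`z ≤ a + b + d − r + t = m + d` on the summation index of `P₃` leave the single term `z = m + d`.
Its sign `(−1)^(m+d)` cancels the prefactor `(−1)^(d+3m)`, so `ω` collapses to a product of
factorial quotients. -/

lemma rfac_of_neg {k : ℤ} (h : k < 0) : rfac k = 0 := by simp [rfac, not_le.2 h]

lemma rfac_natCast (k : ℕ) : rfac (k : ℤ) = 1 / (k.factorial : ℂ) := by simp [rfac]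

lemma P1_diag (d m : ℕ) :
    P1 d m m m m = (m.factorial : ℂ) ^ 6 * ((d - m).factorial : ℂ) ^ 2 /
      (((2 * m).factorial : ℂ) ^ 2 * (d.factorial : ℂ)) := by
  rw [P1, show 2 * m - m = m by omega, show 2 * m + d - 2 * m - m = d - m by omega,
    show 2 * m + d - 2 * m = d by omega]
  ring

lemma P2_diag (d m : ℕ) :
    P2 d m m m m 0 = ((2 * m).factorial : ℂ) / ((2 * m + 1).factorial * (d + 1).factorial) := by
  have hm : (m.factorial : ℂ) ≠ 0 := Nat.cast_ne_zero.2 m.factorial_ne_zero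
  rw [P2, show (m + m + 0) / 2 = m by omega, show m + m - 0 = 2 * m by omega,
    show m + 0 - m = 0 by omega, show m + m + d - m - m + 0 + 1 = d + 1 by omega,
    show m + m + 0 + 1 = 2 * m + 1 by omega, show 2 * m / 2 = m by omega]
  field_simp
  simp

lemma P3_diag (d m : ℕ) (h : m ≤ d) :
    P3 d m m m m 0 = (-1 : ℂ) ^ (m + d) * ((m + d + 1).factorial : ℂ) /
      (((d - m).factorial : ℂ) * (m.factorial : ℂ) * (m.factorial : ℂ)) := by
  rw [P3, Finset.sum_eq_single_of_mem (m + d) (Finset.mem_range.2 (by omega))]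
  · rw [show ((↑(m + d) : ℤ) - ↑m - ↑m - ((0 : ℕ) : ℤ)) = ((d - m : ℕ) : ℤ) by omega,
      show ((↑(m + d) : ℤ) - 2 * ↑m - ↑d + ↑m) = ((0 : ℕ) : ℤ) by omega,
      show ((↑(m + d) : ℤ) - 2 * ↑m - 2 * ↑m - ↑d + 2 * ↑m + ↑m) = ((0 : ℕ) : ℤ) by omega,
      show ((↑(m + d) : ℤ) - ↑m - ↑m - ↑d + ↑m + ↑m - ((0 : ℕ) : ℤ)) = ((m : ℕ) : ℤ) by omega,
      show ((m : ℤ) + ↑m + ↑d - ↑m + ((0 : ℕ) : ℤ) - ↑(m + d)) = ((0 : ℕ) : ℤ) by omega,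
      show (2 * (m : ℤ) + 2 * ↑m + ↑d - ↑m - ↑m - ↑(m + d)) = ((m : ℕ) : ℤ) by omega,
      show ((m : ℤ) + 3 * ↑m + ↑d - 2 * ↑m - ↑m + ((0 : ℕ) : ℤ) - ↑(m + d)) = ((0 : ℕ) : ℤ)
        by omega]
    simp only [rfac_natCast, Nat.factorial_zero, Nat.cast_one]
    ring
  · intro z _ hz
    rcases Ne.lt_or_gt hz with hlt | hgt
    · rw [rfac_of_neg (k := (z : ℤ) - 2 * m - d + m) (by omega)]
      ring
    · rw [rfac_of_neg (k := (m : ℤ) + m + d - m + ((0 : ℕ) : ℤ) - z) (by omega)]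
      ring

def omegaDiag (d m : ℕ) : ℚ :=
  (m.factorial : ℚ) ^ 4 * (d - m).factorial * (m + d + 1).factorial /
    ((2 * m).factorial * (2 * m + 1).factorial * d.factorial * (d + 1).factorial)

lemma omegaDiag_pos (d m : ℕ) : 0 < omegaDiag d m := by
  unfold omegaDiag
  positivity

lemma omegaC_diag (d m : ℕ) (h : m ≤ d) : omegaC d m m m m 0 = (omegaDiag d m : ℂ) := by
  have hsign : (-1 : ℂ) ^ (d + m + m + m) * (-1) ^ (m + d) = 1 := by
    rw [← pow_add, show d + m + m + m + (m + d) = 2 * (d + 2 * m) by omega, pow_mul]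
    norm_num
  have hm : (m.factorial : ℂ) ≠ 0 := Nat.cast_ne_zero.2 m.factorial_ne_zero
  have hdm : ((d - m).factorial : ℂ) ≠ 0 := Nat.cast_ne_zero.2 (d - m).factorial_ne_zero
  rw [omegaC, P1_diag, P2_diag, P3_diag d m h, omegaDiag, show (m + m - 0) / 2 = m by omega]
  push_cast
  field_simp
  rw [hsign, one_mul]

theorem stmt12_general (d : ℕ) (i : ℕ) :
    ∃ q : ℚ, 0 < q ∧
      omegaC d (d - 2 * i) (d - 2 * i) (d - 2 * i) (d - 2 * i) 0 = (q : ℂ) :=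
  ⟨omegaDiag d (d - 2 * i), omegaDiag_pos _ _, omegaC_diag _ _ (Nat.sub_le _ _)⟩

/-- the coefficient `α_{i,i}^{(0)} = ω(d−2i, d−2i; d−2i, d−2i; 0)` is a
strictly positive rational number, for every `0 ≤ i ≤ ⌊d/2⌋`. -/
theorem stmt12 (d : ℕ) (hd : 1 ≤ d) (i : ℕ) (hi : i ≤ d / 2) :
    ∃ q : ℚ, 0 < q ∧
      omegaC d (d - 2 * i) (d - 2 * i) (d - 2 * i) (d - 2 * i) 0 = (q : ℂ) :=
  stmt12_general d i
end

section
/- Fix d ≥ 1 and set n = ⌊d/2⌋. Work in the polynomial ring ℂ[q₀,q₁,q₂,x₁,x₂,y₁,y₂]. Let Δ = 4(q₁² − q₀q₂) and let Q_{xy} = q₀x₁y₁ + q₁(x₁y₂ + x₂y₁) + q₂x₂y₂ (the first polar of the quadratic Q = q₀x₁² + 2q₁x₁x₂ + q₂x₂²). If complex numbers λ₀,…,λ_n satisfy Σ_{i=0}^{n} λ_i · Δ^i · (x₁y₂ − x₂y₁)^{2i} · Q_{xy}^{d−2i} = 0 as a polynomial identity, then λ₀ = λ₁ = ⋯ = λ_n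 = 0. -/
open MvPolynomial Finset

/-!
Specialise `q₀ = q₁ = x₁ = y₂ = 1`, `x₂ = y₁ = 0` and `q₂ = 1 - t`. Then `x₁y₂ − x₂y₁ = 1`,
`Q_{xy} = 1` and `Δ = 4t`, so the relation becomes `∑ λᵢ (4t)ⁱ = 0` in `ℂ[t]`, and comparing
coefficients gives `λᵢ = 0`.
-/

theorem Polynomial.eq_zero_of_sum_smul_C_mul_X_pow_eq_zero {R : Type*} [CommRing R]
    [NoZeroDivisors R] {a : R} (ha : a ≠ 0) {n : ℕ} {c : ℕ → R}
    (h : ∑ j ∈ range n, c j • (Polynomial.C a * Polynomial.X) ^ j = 0) :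
    ∀ i < n, c i = 0 := by
  intro i hi
  have hcoeff := congrArg (Polynomial.coeff · i) h
  simp only [Polynomial.finsetSum_coeff, Polynomial.coeff_smul, mul_pow, ← map_pow,
    Polynomial.coeff_C_mul_X_pow, smul_eq_mul, mul_ite, mul_zero, Finset.sum_ite_eq,
    Finset.mem_range, if_pos hi, Polynomial.coeff_zero] at hcoeff
  exact (mul_eq_zero.1 hcoeff).resolve_right (pow_ne_zero _ ha)

noncomputable def specialPoint : Fin 7 → Polynomial ℂ :=
  ![1, 1, 1 - Polynomial.X, 1, 0, 0, 1]

theorem aeval_specialPoint_discr_pow_mul_bracket_pow_mul_polar_pow (i k : ℕ) :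
    aeval specialPoint
        ((4 * ((X 1 : MvPolynomial (Fin 7) ℂ) ^ 2 - X 0 * X 2)) ^ i *
          (X 3 * X 6 - X 4 * X 5) ^ (2 * i) *
          (X 0 * (X 3 * X 5) + X 1 * (X 3 * X 6 + X 4 * X 5) + X 2 * (X 4 * X 6)) ^ k) =
      (Polynomial.C 4 * Polynomial.X) ^ i := by
  simp [specialPoint, map_ofNat]

theorem stmt15_general (d : ℕ) (lam : ℕ → ℂ)
    (h : ∑ i ∈ range (d / 2 + 1),
        lam i •
          ((4 * ((X 1 : MvPolynomial (Fin 7) ℂ) ^ 2 - X 0 * X 2)) ^ i *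
            (X 3 * X 6 - X 4 * X 5) ^ (2 * i) *
            (X 0 * (X 3 * X 5) + X 1 * (X 3 * X 6 + X 4 * X 5) + X 2 * (X 4 * X 6)) ^
              (d - 2 * i)) = 0) :
    ∀ i ≤ d / 2, lam i = 0 := by
  have hspec := congrArg (aeval specialPoint) h
  simp only [map_sum, map_smul, aeval_specialPoint_discr_pow_mul_bracket_pow_mul_polar_pow,
    map_zero] at hspec
  intro i hi
  exact Polynomial.eq_zero_of_sum_smul_C_mul_X_pow_eq_zero (by norm_num) hspec i
    (Nat.lt_succ_of_le hi)

/-- in `ℂ[q₀,q₁,q₂,x₁,x₂,y₁,y₂]` (variables `X 0,…,X 6` in that order), with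
`Δ = 4(q₁²−q₀q₂)`, the polynomials `Δ^i (x₁y₂−x₂y₁)^{2i} Q_{xy}^{d−2i}`, `0 ≤ i ≤ ⌊d/2⌋`,
are linearly independent, where `Q_{xy} = q₀x₁y₁ + q₁(x₁y₂+x₂y₁) + q₂x₂y₂`. -/
theorem stmt15 (d : ℕ) (hd : 1 ≤ d) (lam : ℕ → ℂ)
    (h : ∑ i ∈ range (d / 2 + 1),
        lam i •
          ((4 * ((X 1 : MvPolynomial (Fin 7) ℂ) ^ 2 - X 0 * X 2)) ^ i *
            (X 3 * X 6 - X 4 * X 5) ^ (2 * i) *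
            (X 0 * (X 3 * X 5) + X 1 * (X 3 * X 6 + X 4 * X 5) + X 2 * (X 4 * X 6)) ^
              (d - 2 * i)) = 0) :
    ∀ i ≤ d / 2, lam i = 0 :=
  stmt15_general d lam h
end

section
/- Fix d ≥ 1 and set n = ⌊d/2⌋. If complex numbers μ₀,…,μ_n satisfy Σ_{i=0}^{n} μ_i · Δ_Q^{d−i} · (Q^{2i}, F)_{2i} = 0 for every binary quadratic Q and every binary form F of order d, then μ₀ = μ₁ = ⋯ = μ_n = 0. (Here (Q^{0},F)_{0} = F.) -/
open MvPolynomial Finset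

/-!
Take `Q = x₁x₂`, so that `Δ_Q = 1`, and `F = x₁^a x₂^(d-a)` with `0 ≤ a ≤ d`. Then
`(Q^{2i}, F)_{2i} = c_i Λ_{2i}(a) F`, where `c_i ≠ 0` is the normalising factor of the
transvectant and `Λ_{2i} = transvPoly d (2 * i)` is a polynomial of exact degree `2i`. The
hypothesis makes `Σ μ_i c_i Λ_{2i}`, of degree at most `d`, vanish at `a = 0, …, d`, so it is the
zero polynomial; polynomials of pairwise distinct degrees are linearly independent, so every
`μ_i` vanishes.
-/

open scoped Polynomial

namespace Polynomial

variable {R : Type*} [CommRing R] [IsDomain R]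

lemma natDegree_descPochhammer_comp_C_sub_X (c : R) (m : ℕ) :
    ((descPochhammer R m).comp (C c - X)).natDegree = m := by
  rw [natDegree_comp, ← neg_sub, natDegree_neg, natDegree_X_sub_C, descPochhammer_natDegree,
    mul_one]

lemma leadingCoeff_descPochhammer_comp_C_sub_X (c : R) (m : ℕ) :
    ((descPochhammer R m).comp (C c - X)).leadingCoeff = (-1) ^ m := by
  have hq : (C c - X).natDegree ≠ 0 := by
    rw [← neg_sub, natDegree_neg, natDegree_X_sub_C]
    exact one_ne_zero
  rw [leadingCoeff_comp hq, ← neg_sub, leadingCoeff_neg, leadingCoeff_X_sub_C,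
    (monic_descPochhammer R m).leadingCoeff, descPochhammer_natDegree, one_mul]

lemma natDegree_descPochhammer_mul_comp (c : R) (j m : ℕ) :
    (descPochhammer R j * (descPochhammer R m).comp (C c - X)).natDegree = j + m := by
  have hne : (descPochhammer R m).comp (C c - X) ≠ 0 := leadingCoeff_ne_zero.mp <| by
    simp [leadingCoeff_descPochhammer_comp_C_sub_X]
  rw [natDegree_mul (monic_descPochhammer R j).ne_zero hne, descPochhammer_natDegree,
    natDegree_descPochhammer_comp_C_sub_X]

lemma coeff_descPochhammer_mul_comp (c : R) (j m : ℕ) :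
    (descPochhammer R j * (descPochhammer R m).comp (C c - X)).coeff (j + m) = (-1) ^ m := by
  rw [← natDegree_descPochhammer_mul_comp c j m, coeff_natDegree, leadingCoeff_mul,
    (monic_descPochhammer R j).leadingCoeff, leadingCoeff_descPochhammer_comp_C_sub_X, one_mul]

theorem linearIndependent_of_natDegree_injective {ι : Type*} {p : ι → R[X]}
    (hp : ∀ i, p i ≠ 0) (hdeg : Function.Injective (natDegree ∘ p)) : LinearIndependent R p := by
  refine linearIndependent_iff'.mpr fun s g hsum i hi => by_contra fun hgi => ?_
  have hdegree : ∀ j, g j ≠ 0 → (g j • p j).degree = (p j).natDegree := fun j hj => by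
    rw [smul_eq_C_mul, degree_C_mul hj, degree_eq_natDegree (hp j)]
  have hsup := degree_sum_eq_of_disjoint (fun j => g j • p j) s fun j hj k hk hjk => by
    have hgj : g j ≠ 0 := fun h => hj.2 (by simp [h])
    have hgk : g k ≠ 0 := fun h => hk.2 (by simp [h])
    simpa [Function.onFun, hdegree j hgj, hdegree k hgk] using hdeg.ne hjk
  rw [hsum, degree_zero, eq_comm, Finset.sup_eq_bot_iff] at hsup
  simpa [hdegree i hgi] using hsup i hi

end Polynomial

lemma pd_smul (i : Fin 2) (k : ℕ) (c : ℂ) (p : MvPolynomial (Fin 2) ℂ) :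
    pd i k (c • p) = c • pd i k p := by
  change (pderiv i).toLinearMap^[k] (c • p) = c • (pderiv i).toLinearMap^[k] p
  rw [← Module.End.pow_apply, ← Module.End.pow_apply, map_smul]

lemma pd_X_pow_mul (i : Fin 2) (k a : ℕ) {p : MvPolynomial (Fin 2) ℂ} (hp : pderiv i p = 0) :
    pd i k (X i ^ a * p) = (a.descFactorial k : ℂ) • (X i ^ (a - k) * p) := by
  induction k with
  | zero => simp [pd]
  | succ k ih =>
    rw [pd, Function.iterate_succ_apply', ← pd, ih, Derivation.map_smul, pderiv_mul, hp,
      pderiv_pow, pderiv_X_self, Nat.descFactorial_succ, Nat.sub_sub]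
    simp only [mul_zero, add_zero, mul_one, smul_eq_C_mul, Nat.cast_mul, map_mul, map_natCast]
    ring

lemma pd_zero_X_pow_mul_X_pow (k a b : ℕ) :
    pd 0 k (X 0 ^ a * X 1 ^ b : MvPolynomial (Fin 2) ℂ) =
      (a.descFactorial k : ℂ) • (X 0 ^ (a - k) * X 1 ^ b) :=
  pd_X_pow_mul 0 k a (by simp)

lemma pd_one_X_pow_mul_X_pow (k a b : ℕ) :
    pd 1 k (X 0 ^ a * X 1 ^ b : MvPolynomial (Fin 2) ℂ) =
      (b.descFactorial k : ℂ) • (X 0 ^ a * X 1 ^ (b - k)) := by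
  rw [mul_comm, pd_X_pow_mul 1 k b (by simp), mul_comm]

noncomputable def transvCoeff (r p q a b : ℕ) : ℂ :=
  ∑ j ∈ range (r + 1), (-1 : ℂ) ^ j * r.choose j *
    p.descFactorial (r - j) * q.descFactorial j * a.descFactorial j * b.descFactorial (r - j)

noncomputable def transvNorm (m n r : ℕ) : ℂ :=
  (((m - r).factorial * (n - r).factorial : ℕ) : ℂ) / ((m.factorial * n.factorial : ℕ) : ℂ)

lemma transvNorm_ne_zero (m n r : ℕ) : transvNorm m n r ≠ 0 :=
  div_ne_zero (Nat.cast_ne_zero.mpr (by positivity)) (Nat.cast_ne_zero.mpr (by positivity))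

lemma transv_X_pow_mul_X_pow (m n r p q a b : ℕ) :
    transv m n r (X 0 ^ p * X 1 ^ q) (X 0 ^ a * X 1 ^ b) =
      (transvNorm m n r * transvCoeff r p q a b) • (X 0 ^ (p + a - r) * X 1 ^ (q + b - r)) := by
  rw [transv, transvCoeff, mul_smul, sum_smul]
  congr 1
  refine sum_congr rfl fun j hj => ?_
  simp only [pd_zero_X_pow_mul_X_pow, pd_one_X_pow_mul_X_pow, pd_smul, smul_mul_smul_comm,
    smul_smul]
  by_cases hexp : r - j ≤ p ∧ j ≤ q ∧ j ≤ a ∧ r - j ≤ b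
  · have hjr : j ≤ r := Nat.lt_succ_iff.mp (mem_range.mp hj)
    rw [show p + a - r = p - (r - j) + (a - j) by omega,
      show q + b - r = q - j + (b - (r - j)) by omega]
    congr 1 <;> ring
  · simp only [not_and_or, not_le] at hexp
    rcases hexp with h | h | h | h <;> simp [Nat.descFactorial_eq_zero_iff_lt.mpr h]

noncomputable def transvPoly (d r : ℕ) : ℂ[X] :=
  ∑ j ∈ range (r + 1),
    Polynomial.C ((-1 : ℂ) ^ j * r.choose j * r.descFactorial (r - j) * r.descFactorial j) *
      (descPochhammer ℂ j * (descPochhammer ℂ (r - j)).comp (Polynomial.C (d : ℂ) - Polynomial.X))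

lemma transvPoly_eval {d a : ℕ} (ha : a ≤ d) (r : ℕ) :
    (transvPoly d r).eval (a : ℂ) = transvCoeff r r r a (d - a) := by
  rw [transvPoly, transvCoeff, Polynomial.eval_finsetSum]
  refine sum_congr rfl fun j _ => ?_
  simp only [Polynomial.eval_mul, Polynomial.eval_C, Polynomial.eval_comp, Polynomial.eval_sub,
    Polynomial.eval_X, ← Nat.cast_sub ha, descPochhammer_eval_eq_descFactorial]
  ring

lemma natDegree_transvPoly_le (d r : ℕ) : (transvPoly d r).natDegree ≤ r := by
  refine Polynomial.natDegree_sum_le_of_forall_le _ _ fun j hj => ?_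
  have hjr : j + (r - j) = r := Nat.add_sub_cancel' (Nat.lt_succ_iff.mp (mem_range.mp hj))
  exact ((Polynomial.natDegree_C_mul_le _ _).trans_eq
    (Polynomial.natDegree_descPochhammer_mul_comp _ j (r - j))).trans_eq hjr

lemma coeff_transvPoly (d r : ℕ) :
    (transvPoly d r).coeff r = (-1) ^ r * ((∑ j ∈ range (r + 1),
      r.choose j * r.descFactorial (r - j) * r.descFactorial j : ℕ) : ℂ) := by
  rw [transvPoly, Polynomial.finsetSum_coeff, Nat.cast_sum, mul_sum]
  refine sum_congr rfl fun j hj => ?_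
  have hjr : j + (r - j) = r := Nat.add_sub_cancel' (Nat.lt_succ_iff.mp (mem_range.mp hj))
  have hcoeff := Polynomial.coeff_descPochhammer_mul_comp (d : ℂ) j (r - j)
  rw [hjr] at hcoeff
  have hsign : (-1 : ℂ) ^ j * (-1) ^ (r - j) = (-1) ^ r := by rw [← pow_add, hjr]
  rw [Polynomial.coeff_C_mul, hcoeff]
  push_cast
  linear_combination (r.choose j * r.descFactorial (r - j) * r.descFactorial j : ℂ) * hsign

lemma coeff_transvPoly_ne_zero (d r : ℕ) : (transvPoly d r).coeff r ≠ 0 := by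
  rw [coeff_transvPoly]
  refine mul_ne_zero (pow_ne_zero _ (neg_ne_zero.mpr one_ne_zero)) (Nat.cast_ne_zero.mpr ?_)
  refine (sum_pos' (fun _ _ => Nat.zero_le _) ⟨0, mem_range.mpr r.succ_pos, ?_⟩).ne'
  simp [Nat.descFactorial_self, Nat.factorial_pos]

lemma natDegree_transvPoly (d r : ℕ) : (transvPoly d r).natDegree = r :=
  Polynomial.natDegree_eq_of_le_of_coeff_ne_zero (natDegree_transvPoly_le d r)
    (coeff_transvPoly_ne_zero d r)

lemma linearIndependent_transvPoly_two_mul (d : ℕ) :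
    LinearIndependent ℂ fun i => transvPoly d (2 * i) := by
  refine Polynomial.linearIndependent_of_natDegree_injective (fun i h => ?_) fun i k h => ?_
  · simpa [h] using coeff_transvPoly_ne_zero d (2 * i)
  · simpa [natDegree_transvPoly] using h

lemma natDegree_sum_smul_transvPoly_two_mul_le (d : ℕ) (c : ℕ → ℂ) :
    (∑ i ∈ range (d / 2 + 1), c i • transvPoly d (2 * i)).natDegree ≤ d := by
  refine Polynomial.natDegree_sum_le_of_forall_le _ _ fun i hi => ?_
  refine (Polynomial.natDegree_smul_le _ _).trans ?_
  rw [natDegree_transvPoly]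
  have := mem_range.mp hi
  omega

lemma transv_quadF_pow_X_pow_mul_X_pow (d i a : ℕ) (ha : a ≤ d) :
    transv (4 * i) d (2 * i) (quadF 0 (1 / 2) 0 ^ (2 * i)) (X 0 ^ a * X 1 ^ (d - a)) =
      (transvNorm (4 * i) d (2 * i) * (transvPoly d (2 * i)).eval (a : ℂ)) •
        (X 0 ^ a * X 1 ^ (d - a)) := by
  have hQ : quadF 0 (1 / 2) 0 = X 0 * X 1 := by simp [quadF]
  rw [hQ, mul_pow, transv_X_pow_mul_X_pow, transvPoly_eval ha, Nat.add_sub_cancel_left,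
    Nat.add_sub_cancel_left]

theorem stmt17_general (d : ℕ) (mu : ℕ → ℂ)
    (h : ∀ q0 q1 q2 : ℂ, ∀ F : MvPolynomial (Fin 2) ℂ, F.IsHomogeneous d →
      ∑ i ∈ range (d / 2 + 1),
        (mu i * (4 * (q1 ^ 2 - q0 * q2)) ^ (d - i)) •
          transv (4 * i) d (2 * i) ((quadF q0 q1 q2) ^ (2 * i)) F = 0) :
    ∀ i ≤ d / 2, mu i = 0 := by
  set P : ℂ[X] := ∑ i ∈ range (d / 2 + 1),
    (mu i * transvNorm (4 * i) d (2 * i)) • transvPoly d (2 * i) with hP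
  have hroots : ∀ a ≤ d, P.eval (a : ℂ) = 0 := fun a ha => by
    have hF : (X 0 ^ a * X 1 ^ (d - a) : MvPolynomial (Fin 2) ℂ).IsHomogeneous d := by
      simpa [Nat.add_sub_cancel' ha] using
        (isHomogeneous_X_pow 0 a).mul (isHomogeneous_X_pow 1 (d - a))
    have hsum := h 0 (1 / 2) 0 _ hF
    have hΔ : (4 * ((1 / 2 : ℂ) ^ 2 - 0 * 0)) = 1 := by norm_num
    simp only [transv_quadF_pow_X_pow_mul_X_pow d _ a ha, smul_smul, ← sum_smul, hΔ, one_pow,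
      mul_one] at hsum
    have hM : (X 0 ^ a * X 1 ^ (d - a) : MvPolynomial (Fin 2) ℂ) ≠ 0 := by
      simp [X_ne_zero]
    rw [hP, Polynomial.eval_finsetSum]
    simpa [mul_assoc, hM] using hsum
  have hP0 : P = 0 := by
    refine Polynomial.eq_zero_of_natDegree_lt_card_of_eval_eq_zero' P
      ((range (d + 1)).image (Nat.cast : ℕ → ℂ)) ?_ ?_
    · simpa [Nat.lt_succ_iff] using hroots
    · rw [card_image_of_injective _ Nat.cast_injective, card_range, Nat.lt_succ_iff]
      exact natDegree_sum_smul_transvPoly_two_mul_le d _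
  intro i hi
  have hcoeff := linearIndependent_iff'.mp (linearIndependent_transvPoly_two_mul d) _ _ hP0 i
    (mem_range.mpr (Nat.lt_succ_of_le hi))
  exact (mul_eq_zero.mp hcoeff).resolve_right (transvNorm_ne_zero _ _ _)

/-- if `Σ_{i=0}^{⌊d/2⌋} μ_i Δ_Q^{d−i} (Q^{2i},F)_{2i} = 0` for every binary
quadratic `Q` and every binary `d`-ic `F`, then all `μ_i` vanish. -/
theorem stmt17 (d : ℕ) (hd : 1 ≤ d) (mu : ℕ → ℂ)
    (h : ∀ q0 q1 q2 : ℂ, ∀ F : MvPolynomial (Fin 2) ℂ, F.IsHomogeneous d →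
      ∑ i ∈ range (d / 2 + 1),
        (mu i * (4 * (q1 ^ 2 - q0 * q2)) ^ (d - i)) •
          transv (4 * i) d (2 * i) ((quadF q0 q1 q2) ^ (2 * i)) F = 0) :
    ∀ i ≤ d / 2, mu i = 0 :=
  stmt17_general d mu h
end

section
/- Let d = 4 and z = (z₀,z₁,z₂) = (−12, 24/7, 3/5). Then for every binary quadratic Q and every binary form F of order 4 one has σ_{Q,z}(F) − Δ_Q²·F = −12·Q²·(Q²,F)₄; explicitly, −12·(Q⁴,F)₄ + (24/7)·Δ_Q·(Q²,F)₂ − (2/5)·Δ_Q²·F = −12·Q²·(Q²,F)₄. -/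
/-!
Both sides are ℂ-linear in `F`, so it suffices to check the identity on the five monomials
`x₁ᵃx₂ᵇ` with `a + b = 4`, where it is a direct polynomial computation. The form with `σ` is
the same identity, since the `i = 2` term of `σ_{Q,z}(F)` is `(3/5) Δ_Q² (1, F)₀ = (3/5) Δ_Q² F`.
-/

open MvPolynomial Finset

/-- `σ_{Q,z}(F) = Σ_{i=0}^{⌊d/2⌋} z_i Δ^i (Q^{d−2i}, F)_{d−2i}`, where `Δ = Δ_Q`. -/
noncomputable def sigmaQ (d : ℕ) (z : ℕ → ℂ) (Q : MvPolynomial (Fin 2) ℂ) (Δ : ℂ)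
    (F : MvPolynomial (Fin 2) ℂ) : MvPolynomial (Fin 2) ℂ :=
  ∑ i ∈ range (d / 2 + 1),
    (z i * Δ ^ i) • transv (2 * (d - 2 * i)) d (d - 2 * i) (Q ^ (d - 2 * i)) F

theorem LinearMap.eq_zero_of_isHomogeneous {σ R M : Type*} [CommSemiring R] [AddCommMonoid M]
    [Module R M] (L : MvPolynomial σ R →ₗ[R] M) {n : ℕ}
    (hL : ∀ m : σ →₀ ℕ, m.degree = n → L (monomial m 1) = 0)
    {F : MvPolynomial σ R} (hF : F.IsHomogeneous n) : L F = 0 := by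
  rw [F.as_sum, map_sum]
  refine sum_eq_zero fun m hm => ?_
  have hdeg : m.degree = n := by
    by_contra h
    exact mem_support_iff.mp hm (hF.coeff_eq_zero h)
  rw [← mul_one (coeff m F), ← smul_eq_mul, ← smul_monomial, map_smul, hL m hdeg, smul_zero]

theorem monomial_one_fin_two {R : Type*} [CommSemiring R] (m : Fin 2 →₀ ℕ) :
    (monomial m 1 : MvPolynomial (Fin 2) R) = X 0 ^ m 0 * X 1 ^ m 1 := by
  rw [monomial_eq, C_1, one_mul, Finsupp.prod_fintype _ _ fun _ => pow_zero _, Fin.prod_univ_two]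

theorem pd_eq_pow_apply (i : Fin 2) (k : ℕ) (p : MvPolynomial (Fin 2) ℂ) :
    pd i k p = ((pderiv i).toLinearMap ^ k) p := by
  rw [Module.End.pow_apply]
  rfl

theorem transv_add_right (m n r : ℕ) (A B B' : MvPolynomial (Fin 2) ℂ) :
    transv m n r A (B + B') = transv m n r A B + transv m n r A B' := by
  simp only [transv, pd_eq_pow_apply, map_add, mul_add, smul_add, sum_add_distrib]

theorem transv_smul_right (m n r : ℕ) (A : MvPolynomial (Fin 2) ℂ) (c : ℂ)
    (B : MvPolynomial (Fin 2) ℂ) :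
    transv m n r A (c • B) = c • transv m n r A B := by
  simp only [transv, pd_eq_pow_apply, map_smul, mul_smul_comm, smul_comm _ c, smul_sum]

noncomputable def transvLinearMap (m n r : ℕ) (A : MvPolynomial (Fin 2) ℂ) :
    MvPolynomial (Fin 2) ℂ →ₗ[ℂ] MvPolynomial (Fin 2) ℂ where
  toFun := transv m n r A
  map_add' := transv_add_right m n r A
  map_smul' := transv_smul_right m n r A

theorem transv_zero_eq_mul (m n : ℕ) (A B : MvPolynomial (Fin 2) ℂ) :
    transv m n 0 A B = A * B := by
  simp [transv, pd, div_self, Nat.factorial_ne_zero]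

set_option maxHeartbeats 400000 in
theorem quartic_identity_monomial (q0 q1 q2 : ℂ) {a b : ℕ} (hab : a + b = 4) :
    (-12 : ℂ) • transv 8 4 4 ((quadF q0 q1 q2) ^ 4) (X 0 ^ a * X 1 ^ b) +
        (24 / 7 * (4 * (q1 ^ 2 - q0 * q2))) • transv 4 4 2 ((quadF q0 q1 q2) ^ 2)
          (X 0 ^ a * X 1 ^ b) -
        (2 / 5 * (4 * (q1 ^ 2 - q0 * q2)) ^ 2) • (X 0 ^ a * X 1 ^ b) =
      (-12 : ℂ) • ((quadF q0 q1 q2) ^ 2 * transv 4 4 4 ((quadF q0 q1 q2) ^ 2)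
        (X 0 ^ a * X 1 ^ b)) := by
  obtain ⟨rfl, rfl⟩ | ⟨rfl, rfl⟩ | ⟨rfl, rfl⟩ | ⟨rfl, rfl⟩ | ⟨rfl, rfl⟩ :
      (a = 0 ∧ b = 4) ∨ (a = 1 ∧ b = 3) ∨ (a = 2 ∧ b = 2) ∨ (a = 3 ∧ b = 1) ∨ (a = 4 ∧ b = 0) := by
    omega
  all_goals
    simp only [transv, pd, quadF, sum_range_succ, sum_range_zero,
      Function.iterate_succ_apply', Function.iterate_zero_apply, pow_succ, pow_zero, one_mul,
      map_add, pderiv_mul, pderiv_C, pderiv_X_self, pderiv_X_of_ne (by decide : (1 : Fin 2) ≠ 0),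
      pderiv_X_of_ne (by decide : (0 : Fin 2) ≠ 1)]
    apply MvPolynomial.funext
    intro x
    simp [Nat.factorial, Nat.choose]
    ring

theorem quartic_identity (q0 q1 q2 : ℂ) {F : MvPolynomial (Fin 2) ℂ} (hF : F.IsHomogeneous 4) :
    (-12 : ℂ) • transv 8 4 4 ((quadF q0 q1 q2) ^ 4) F +
        (24 / 7 * (4 * (q1 ^ 2 - q0 * q2))) • transv 4 4 2 ((quadF q0 q1 q2) ^ 2) F -
        (2 / 5 * (4 * (q1 ^ 2 - q0 * q2)) ^ 2) • F =
      (-12 : ℂ) • ((quadF q0 q1 q2) ^ 2 * transv 4 4 4 ((quadF q0 q1 q2) ^ 2) F) := by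
  set Q := quadF q0 q1 q2
  set Δ := 4 * (q1 ^ 2 - q0 * q2)
  let L : MvPolynomial (Fin 2) ℂ →ₗ[ℂ] MvPolynomial (Fin 2) ℂ :=
    (-12 : ℂ) • transvLinearMap 8 4 4 (Q ^ 4) + (24 / 7 * Δ) • transvLinearMap 4 4 2 (Q ^ 2) -
      (2 / 5 * Δ ^ 2) • LinearMap.id -
      (-12 : ℂ) • (LinearMap.mulLeft ℂ (Q ^ 2) ∘ₗ transvLinearMap 4 4 4 (Q ^ 2))
  have hL : L F = 0 := by
    refine L.eq_zero_of_isHomogeneous (fun m hm => ?_) hF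
    rw [Finsupp.degree_eq_sum, Fin.sum_univ_two] at hm
    rw [monomial_one_fin_two]
    exact sub_eq_zero.mpr (quartic_identity_monomial q0 q1 q2 hm)
  exact sub_eq_zero.mp hL

theorem sigmaQ_four (z : ℕ → ℂ) (Q : MvPolynomial (Fin 2) ℂ) (Δ : ℂ)
    (F : MvPolynomial (Fin 2) ℂ) :
    sigmaQ 4 z Q Δ F =
      z 0 • transv 8 4 4 (Q ^ 4) F + (z 1 * Δ) • transv 4 4 2 (Q ^ 2) F + (z 2 * Δ ^ 2) • F := by
  simp [sigmaQ, sum_range_succ, transv_zero_eq_mul]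

/-- for `d = 4` and `z = (−12, 24/7, 3/5)`, one has
`σ_{Q,z}(F) − Δ_Q²F = −12 Q² (Q²,F)₄`, i.e. explicitly
`−12(Q⁴,F)₄ + (24/7)Δ_Q(Q²,F)₂ − (2/5)Δ_Q²F = −12 Q²(Q²,F)₄`. -/
theorem stmt18 (q0 q1 q2 : ℂ) (F : MvPolynomial (Fin 2) ℂ) (hF : F.IsHomogeneous 4) :
    sigmaQ 4 (fun i => if i = 0 then (-12 : ℂ) else if i = 1 then 24 / 7 else 3 / 5)
          (quadF q0 q1 q2) (4 * (q1 ^ 2 - q0 * q2)) F -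
        (4 * (q1 ^ 2 - q0 * q2)) ^ 2 • F =
      (-12 : ℂ) • ((quadF q0 q1 q2) ^ 2 * transv 4 4 4 ((quadF q0 q1 q2) ^ 2) F) ∧
    (-12 : ℂ) • transv 8 4 4 ((quadF q0 q1 q2) ^ 4) F +
        (24 / 7 * (4 * (q1 ^ 2 - q0 * q2))) • transv 4 4 2 ((quadF q0 q1 q2) ^ 2) F -
        (2 / 5 * (4 * (q1 ^ 2 - q0 * q2)) ^ 2) • F =
      (-12 : ℂ) • ((quadF q0 q1 q2) ^ 2 * transv 4 4 4 ((quadF q0 q1 q2) ^ 2) F) := by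
  have h := quartic_identity q0 q1 q2 hF
  refine ⟨?_, h⟩
  simp only [sigmaQ_four, ↓reduceIte, one_ne_zero, OfNat.ofNat_ne_zero, OfNat.ofNat_ne_one]
  linear_combination (norm := module) h
end
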